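/- For distinct x, y in the open unit disk D, |x·∇ₓ⊥G_D(x,y)| ≤ 2·dist(x,∂D)·dist(y,∂D)/(π|x−y|³), where G_D is the Green's function of the disk and dist(z,∂D) = 1−|z|. -/

import Mathlib

open Real Complex
noncomputable section
/-- euclidean dot product on ℝ² ≅ ℂ -/
def dotC (v w : ℂ) : ℝ := (v * (starRingEnd ℂ) w).re
/-- rotation by π/2 on ℝ² ≅ ℂ -/
def perpC (v : ℂ) : ℂ := Complex.I * v
/-- inversion in the unit circle -/
def inv0 (y : ℂ) : ℂ := y / ((‖y‖ : ℂ)^2)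
/-- Green function of the unit disk: (1/2π) ln (|x−y| / (|x−y*||y|)) -/
def GD (x y : ℂ) : ℝ :=
  (1/(2*π)) * (Real.log (‖x - y‖) - Real.log (‖x - inv0 y‖ * ‖y‖))
/-- perpendicular gradient (in the first variable) of the disk Green function -/
def gradPerpGD (x y : ℂ) : ℂ := perpC (gradient (fun z => GD z y) x)

open InnerProductSpace in
lemma hasGradientAt_logAbs (a x : ℂ) (h : x ≠ a) :
    HasGradientAt (fun z => Real.log (‖z - a‖)) ((‖x - a‖^2)⁻¹ • (x - a)) x := by
  have hne0 : x - a ≠ 0 := sub_ne_zero.mpr h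
  have hne : ‖x - a‖^2 ≠ 0 := pow_ne_zero _ (norm_ne_zero_iff.mpr hne0)
  have h1 : HasFDerivAt (fun z : ℂ => ‖z - a‖^2)
      (2 • (innerSL ℝ (x - a)).comp (ContinuousLinearMap.id ℝ ℂ)) x := by
    simpa using ((hasFDerivAt_id x).sub_const a).norm_sq
  have h2 := (h1.log hne).const_mul (1/2 : ℝ)
  rw [hasGradientAt_iff_hasFDerivAt]
  have heq : (fun z : ℂ => Real.log (‖z - a‖)) =
      fun z => (1/2 : ℝ) * Real.log (‖z - a‖^2) := by
    funext z
    rw [Real.log_pow]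
    push_cast
    ring
  rw [heq]
  refine h2.congr_fderiv ?_
  ext v
  have habs : ‖x - a‖ ≠ 0 := by rwa [norm_ne_zero_iff]
  simp [real_inner_smul_left, smul_smul, ← Complex.ofReal_pow]
  field_simp
  ring

lemma HasGradientAt.smul' {f : ℂ → ℝ} {f' x : ℂ} (c : ℝ) (hf : HasGradientAt f f' x) :
    HasGradientAt (fun z => c * f z) (c • f') x := by
  rw [hasGradientAt_iff_hasFDerivAt] at *
  refine (hf.const_mul c).congr_fderiv ?_
  ext v
  simp [real_inner_smul_left]
  ring

lemma HasGradientAt.sub' {f g : ℂ → ℝ} {f' g' x : ℂ} (hf : HasGradientAt f f' x)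
    (hg : HasGradientAt g g' x) : HasGradientAt (fun z => f z - g z) (f' - g') x := by
  rw [hasGradientAt_iff_hasFDerivAt] at *
  refine (hf.sub hg).congr_fderiv ?_
  ext v
  simp [inner_sub_left]

lemma HasGradientAt.sub_const' {f : ℂ → ℝ} {f' x : ℂ} (c : ℝ) (hf : HasGradientAt f f' x) :
    HasGradientAt (fun z => f z - c) f' x := by
  rw [hasGradientAt_iff_hasFDerivAt] at *
  exact hf.sub_const c

lemma abs_inv0 {y : ℂ} (hy0 : y ≠ 0) : ‖inv0 y‖ = (‖y‖)⁻¹ := by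
  have h : ‖y‖ ≠ 0 := norm_ne_zero_iff.mpr hy0
  rw [inv0, norm_div, norm_pow, Complex.norm_real, Real.norm_of_nonneg (norm_nonneg y)]
  field_simp

lemma x_ne_inv0 {x y : ℂ} (hx : ‖x‖ < 1) (hy : ‖y‖ < 1) (hy0 : y ≠ 0) :
    x ≠ inv0 y := by
  intro h
  have hpos : 0 < ‖y‖ := norm_pos_iff.mpr hy0
  have h1 : 1 < (‖y‖)⁻¹ := (one_lt_inv₀ hpos).mpr hy
  rw [h, abs_inv0 hy0] at hx
  linarith

lemma hasGradientAt_GD {x y : ℂ} (hx : ‖x‖ < 1) (hy : ‖y‖ < 1)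
    (hxy : x ≠ y) (hy0 : y ≠ 0) :
    HasGradientAt (fun z => GD z y)
      ((1/(2*π)) • ((‖x - y‖^2)⁻¹ • (x - y) - (‖x - inv0 y‖^2)⁻¹ • (x - inv0 y))) x := by
  have hxi : x ≠ inv0 y := x_ne_inv0 hx hy hy0
  have base := (((hasGradientAt_logAbs y x hxy).sub' (hasGradientAt_logAbs (inv0 y) x hxi)).sub_const'
    (Real.log (‖y‖))).smul' (1/(2*π))
  apply base.congr_of_eventuallyEq
  filter_upwards [eventually_ne_nhds hxi] with z hz
  unfold GD
  rw [Real.log_mul (norm_ne_zero_iff.mpr (sub_ne_zero.mpr hz)) (norm_ne_zero_iff.mpr hy0)]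
  ring

lemma dotC_perpC (x v : ℂ) : dotC x (perpC v) = (x * (starRingEnd ℂ) v).im := by
  simp [dotC, perpC, Complex.mul_re, Complex.mul_im, Complex.conj_re, Complex.conj_im]
  ring

lemma final_ineq (m q s t d ax ay : ℝ) (hq : 0 < q) (hs : 0 < s) (ht : 0 < t)
    (hd : 0 < d) (hax : 0 ≤ ax) (hay : 0 ≤ ay) (hax1 : ax < 1) (hay1 : ay < 1)
    (hsd : s = d^2) (hT : q*t = d^2 + (1-ax^2)*(1-ay^2)) (hm : |m| ≤ d * ay) :
    |(1/(2*π)) * (s⁻¹ * (-m) - t⁻¹ * (-(m/q)))| ≤ 2*(1-ax)*(1-ay)/(π*d^3) := by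
  have hax2 : 0 ≤ 1 - ax ^ 2 := by nlinarith
  have hay2 : 0 ≤ 1 - ay ^ 2 := by nlinarith
  have hP : 0 ≤ (1-ax^2)*(1-ay^2) := mul_nonneg hax2 hay2
  have e1 : 1 - ax^2 ≤ 2*(1-ax) := by nlinarith
  have e2 : 1 - ay^2 ≤ 2*(1-ay) := by nlinarith
  have hP4 : (1-ax^2)*(1-ay^2) ≤ 4 * (1-ax) * (1-ay) := by
    calc (1-ax^2)*(1-ay^2) ≤ (2*(1-ax))*(2*(1-ay)) := mul_le_mul e1 e2 hay2 (by linarith)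
      _ = 4 * (1-ax) * (1-ay) := by ring
  have hmd : |m| ≤ d := by nlinarith
  have hTges : s ≤ q * t := by nlinarith
  have hE : (1/(2*π)) * (s⁻¹ * (-m) - t⁻¹ * (-(m/q))) = (1/(2*π)) * (m * (s - q*t)) / (s * (q*t)) := by
    field_simp
    ring
  rw [hE]
  have hqt : 0 < q * t := by positivity
  have habs : |(1/(2*π)) * (m * (s - q*t)) / (s * (q*t))| =
      (1/(2*π)) * (|m| * (q*t - s)) / (s * (q*t)) := by
    rw [abs_div, abs_mul, abs_mul]
    rw [abs_of_pos (by positivity : (0:ℝ) < 1/(2*π)), abs_of_pos (by positivity : 0 < s * (q*t))]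
    rw [abs_of_nonpos (by linarith : s - q*t ≤ 0)]
    ring_nf
  rw [habs]
  have hqtP : q * t - s = (1-ax^2)*(1-ay^2) := by rw [hT, hsd]; ring
  rw [hqtP]
  calc (1/(2*π)) * (|m| * ((1-ax^2)*(1-ay^2))) / (s * (q*t))
      ≤ (1/(2*π)) * (d * (4 * (1-ax) * (1-ay))) / (d^2 * d^2) := by
        apply div_le_div₀ (mul_nonneg (by positivity)
          (mul_nonneg hd.le (by nlinarith)))
        · apply mul_le_mul_of_nonneg_left _ (by positivity)
          exact mul_le_mul hmd hP4 hP (le_of_lt hd)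
        · positivity
        · calc d^2 * d^2 = s * s := by rw [hsd]
            _ ≤ s * (q*t) := mul_le_mul_of_nonneg_left hTges hs.le
    _ = 2*(1-ax)*(1-ay)/(π*d^3) := by
        field_simp
        ring

theorem stmt_11 (x y : ℂ) (hx : ‖x‖ < 1) (hy : ‖y‖ < 1) (hxy : x ≠ y) :
    |dotC x (gradPerpGD x y)| ≤
      2 * (1 - ‖x‖) * (1 - ‖y‖) / (π * ‖x - y‖ ^ 3) := by
  have hd : 0 < ‖x - y‖ := norm_pos_iff.mpr (sub_ne_zero.mpr hxy)
  have hax : 0 ≤ ‖x‖ := norm_nonneg x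
  have hay : 0 ≤ ‖y‖ := norm_nonneg y
  have hrhs : 0 ≤ 2 * (1 - ‖x‖) * (1 - ‖y‖) / (π * ‖x - y‖ ^ 3) := by
    apply div_nonneg
    · nlinarith
    · positivity
  by_cases hy0 : y = 0
  · -- y = 0 : the quantity vanishes
    subst hy0
    have hx0 : x ≠ 0 := hxy
    have hGD : (fun z => GD z 0) = fun z => (1/(2*π)) * Real.log (‖z - 0‖) := by
      funext z
      simp [GD, inv0]
    have hgrad : HasGradientAt (fun z => GD z 0)
        ((1/(2*π)) • ((‖x - 0‖^2)⁻¹ • (x - 0))) x := by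
      rw [hGD]
      exact (hasGradientAt_logAbs 0 x (by simpa using hx0)).smul' (1/(2*π))
    rw [gradPerpGD, hgrad.gradient, dotC_perpC]
    have : (x * (starRingEnd ℂ) ((1/(2*π)) • ((‖x - 0‖^2)⁻¹ • (x - 0)))).im = 0 := by
      simp [Complex.mul_im, Complex.conj_re, Complex.conj_im, Complex.smul_re, Complex.smul_im,
        ← Complex.ofReal_pow]
      ring
    rw [this]
    simpa using hrhs
  · -- main case
    have hxi : x ≠ inv0 y := x_ne_inv0 hx hy hy0
    have hgrad := hasGradientAt_GD hx hy hxy hy0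
    have hq : (0:ℝ) < (‖y‖)^2 := pow_pos (norm_pos_iff.mpr hy0) 2
    have hqne : (‖y‖)^2 ≠ 0 := hq.ne'
    have hs : (0:ℝ) < ‖x - y‖^2 := pow_pos (norm_pos_iff.mpr (sub_ne_zero.mpr hxy)) 2
    have ht : (0:ℝ) < ‖x - inv0 y‖^2 := pow_pos (norm_pos_iff.mpr (sub_ne_zero.mpr hxi)) 2
    have h1 : (x * (starRingEnd ℂ) (x - y)).im = -(x * (starRingEnd ℂ) y).im := by
      simp [map_sub, mul_sub, Complex.mul_conj]
    have h2 : (x * (starRingEnd ℂ) (x - inv0 y)).im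
        = -((x * (starRingEnd ℂ) y).im/(‖y‖)^2) := by
      rw [inv0]
      simp [map_sub, mul_sub, Complex.mul_conj, map_div₀, Complex.mul_im, Complex.div_re,
        Complex.div_im, Complex.normSq_apply, Complex.conj_re, Complex.conj_im,
        ← Complex.ofReal_pow]
      rw [Complex.sq_norm, Complex.normSq_apply] at hqne
      field_simp
      ring
    have key : dotC x (gradPerpGD x y) = (1/(2*π)) * ((‖x - y‖^2)⁻¹ * (-(x * (starRingEnd ℂ) y).im)
        - (‖x - inv0 y‖^2)⁻¹ * (-((x * (starRingEnd ℂ) y).im/(‖y‖)^2))) := by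
      rw [gradPerpGD, hgrad.gradient, dotC_perpC]
      have aux : ∀ (c r t : ℝ) (u w : ℂ),
          (x * (starRingEnd ℂ) (c • (r • u - t • w))).im
            = c * (r * (x * (starRingEnd ℂ) u).im - t * (x * (starRingEnd ℂ) w).im) := by
        intro c r t u w
        simp [Complex.mul_im, Complex.smul_re, Complex.smul_im, Complex.conj_re, Complex.conj_im]
        ring
      rw [aux, h1, h2]
    have hT : (‖y‖)^2 * ‖x - inv0 y‖^2 =
        (‖x - y‖)^2 + (1 - (‖x‖)^2) * (1 - (‖y‖)^2) := by
      rw [Complex.sq_norm, Complex.sq_norm, Complex.sq_norm,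
        Complex.sq_norm, Complex.normSq_apply, Complex.normSq_apply, Complex.normSq_apply,
        Complex.normSq_apply, inv0]
      have hqne2 : y.re * y.re + y.im * y.im ≠ 0 := by
        rwa [Complex.sq_norm, Complex.normSq_apply] at hqne
      simp [Complex.div_re, Complex.div_im, Complex.normSq_apply, Complex.sq_norm,
        ← Complex.ofReal_pow]
      have hqne3 : y.re ^ 2 + y.im ^ 2 ≠ 0 := by rw [sq, sq]; exact hqne2
      field_simp
      ring
    have hsd : ‖x - y‖^2 = (‖x - y‖)^2 := by rfl
    have hm : |(x * (starRingEnd ℂ) y).im| ≤ ‖x - y‖ * ‖y‖ := by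
      have h0 : (x * (starRingEnd ℂ) y).im = ((x - y) * (starRingEnd ℂ) y).im := by
        simp [sub_mul, Complex.mul_conj]
      calc |(x * (starRingEnd ℂ) y).im| ≤ ‖(x - y) * (starRingEnd ℂ) y‖ := by
            rw [h0]; exact Complex.abs_im_le_norm _
        _ = ‖x - y‖ * ‖y‖ := by rw [norm_mul, Complex.norm_conj]
    rw [key]
    exact final_ineq _ _ _ _ _ _ _ hq hs ht hd hax hay hx hy hsd hT hm
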